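/- arXiv:2212.07356 — 3 statements merged into one kernel-verified Lean document; each statement's English description precedes it below -/
import Mathlib

section
/- Let d ≥ 1 and 1 ≤ r ≤ d be real numbers, let 0 < μ ≤ L, and let K be a nonempty finite index set with weights p_k ≥ 0 (k ∈ K) summing to 1. For each k ∈ K let F_k : ℝ^n → ℝ be differentiable, L-smooth and μ-strongly convex, and let F_k* = inf F_k (attained). Let F : ℝ^n → ℝ attain its global minimum F* at θ* ∈ ℝ^n. Let ζ1, ζ2 ≥ 0 satisfy |F* − Σ_{k∈K} p_k F_k*| ≤ ζ1 and |F* − Σ_{k∈K} p_k F_k(θ*)| ≤ ζ2, and set A = 2(ζ1 + ζ2). Let 0 < α ≤ 1/(4L), let θ̄ ∈ ℝ^n, and let ḡ = (r/d) Σ_{k∈K} p_k ∇F_k(θ̄). Then ‖θ̄ − θ* − α ḡ‖² ≤ (1 − μ α r / d) ‖θ̄ − θ*‖² + α r A / d. -/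
/-!
Write `v = θ̄ - θ*`, `g = Σ p_k ∇F_k(θ̄)` and `c = α r / d ≤ 1 / (4L)`, and expand
`‖v - c g‖² = ‖v‖² - 2c⟪v, g⟫ + c²‖g‖²`. Strong convexity bounds `⟪v, g⟫` below by
`B - S + (μ/2)‖v‖²`, where `B` and `S` are the weighted optimality gaps `Σ p_k (F_k - F_k*)` at
`θ̄` and at `θ*`. Smoothness and Jensen's inequality give `‖g‖² ≤ 4L B`, so `c²‖g‖² ≤ c B` is
absorbed by the cross term, and `S ≤ ζ1 + ζ2` by the heterogeneity bounds.
-/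

open RealInnerProductSpace Finset

section Smooth

variable {E : Type*} [NormedAddCommGroup E] [InnerProductSpace ℝ E] [CompleteSpace E]
  {f : E → ℝ} {L : ℝ}

/-- The descent lemma, with the constant `L` that the mean value inequality gives
in place of the sharp `L / 2`. -/
theorem le_add_inner_gradient_add_mul_norm_sq (hL : 0 ≤ L) (hf : Differentiable ℝ f)
    (hlip : ∀ x y, ‖gradient f x - gradient f y‖ ≤ L * ‖x - y‖) (x y : E) :
    f y ≤ f x + ⟪gradient f x, y - x⟫ + L * ‖y - x‖ ^ 2 := by
  have hmv : ‖f y - f x - fderiv ℝ f x (y - x)‖ ≤ L * ‖y - x‖ * ‖y - x‖ := by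
    refine (convex_segment x y).norm_image_sub_le_of_norm_fderiv_le' (fun z _ ↦ hf z)
      (fun z hz ↦ ?_) (left_mem_segment ℝ x y) (right_mem_segment ℝ x y)
    rw [← toDual_gradient, ← toDual_gradient, ← map_sub, LinearIsometryEquiv.norm_map]
    exact (hlip z x).trans (mul_le_mul_of_nonneg_left (norm_sub_le_of_mem_segment hz) hL)
  rw [← inner_gradient_left, Real.norm_eq_abs] at hmv
  linarith [(abs_le.mp hmv).2]

theorem norm_gradient_sq_le_mul_sub_of_le (hL : 0 < L) (hf : Differentiable ℝ f)
    (hlip : ∀ x y, ‖gradient f x - gradient f y‖ ≤ L * ‖x - y‖)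
    {m : ℝ} (hm : ∀ z, m ≤ f z) (x : E) :
    ‖gradient f x‖ ^ 2 ≤ 4 * L * (f x - m) := by
  have hstep := le_add_inner_gradient_add_mul_norm_sq hL.le hf hlip x
    (x - (2 * L)⁻¹ • gradient f x)
  rw [sub_sub_cancel_left, inner_neg_right, norm_neg, real_inner_smul_right,
    real_inner_self_eq_norm_sq, norm_smul, mul_pow, Real.norm_eq_abs, sq_abs] at hstep
  have hmin := hm (x - (2 * L)⁻¹ • gradient f x)
  have hdecrease : (2 * L)⁻¹ * ‖gradient f x‖ ^ 2 - L * ((2 * L)⁻¹ ^ 2 * ‖gradient f x‖ ^ 2)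
      = ‖gradient f x‖ ^ 2 / (4 * L) := by field_simp; ring
  rw [← div_le_iff₀' (by positivity)]
  linarith

end Smooth

theorem norm_sum_smul_sq_le {ι E : Type*} [NormedAddCommGroup E] [NormedSpace ℝ E]
    {K : Finset ι} {p : ι → ℝ} (hp : ∀ k ∈ K, 0 ≤ p k) (hsum : ∑ k ∈ K, p k = 1) (v : ι → E) :
    ‖∑ k ∈ K, p k • v k‖ ^ 2 ≤ ∑ k ∈ K, p k * ‖v k‖ ^ 2 :=
  (convexOn_univ_norm.pow (fun _ _ ↦ norm_nonneg _) 2).map_sum_le hp hsum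
    (fun _ _ ↦ Set.mem_univ _)

section Weighted

variable {ι E : Type*} [NormedAddCommGroup E] [InnerProductSpace ℝ E] [CompleteSpace E]
  {K : Finset ι} {p : ι → ℝ} {f : ι → E → ℝ}

theorem norm_sum_smul_gradient_sq_le {L : ℝ} (hL : 0 < L) (hp : ∀ k ∈ K, 0 ≤ p k)
    (hsum : ∑ k ∈ K, p k = 1) (hf : ∀ k ∈ K, Differentiable ℝ (f k))
    (hlip : ∀ k ∈ K, ∀ x y, ‖gradient (f k) x - gradient (f k) y‖ ≤ L * ‖x - y‖)
    {m : ι → ℝ} (hm : ∀ k ∈ K, ∀ z, m k ≤ f k z) (x : E) :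
    ‖∑ k ∈ K, p k • gradient (f k) x‖ ^ 2 ≤ 4 * L * ∑ k ∈ K, p k * (f k x - m k) :=
  calc ‖∑ k ∈ K, p k • gradient (f k) x‖ ^ 2
      ≤ ∑ k ∈ K, p k * ‖gradient (f k) x‖ ^ 2 := norm_sum_smul_sq_le hp hsum _
    _ ≤ ∑ k ∈ K, p k * (4 * L * (f k x - m k)) := sum_le_sum fun k hk ↦
        mul_le_mul_of_nonneg_left
          (norm_gradient_sq_le_mul_sub_of_le hL (hf k hk) (hlip k hk) (hm k hk) x) (hp k hk)
    _ = 4 * L * ∑ k ∈ K, p k * (f k x - m k) := by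
        rw [mul_sum]; exact sum_congr rfl fun k _ ↦ by ring

theorem sum_mul_sub_add_le_inner_sum_smul_gradient {μ : ℝ} (hp : ∀ k ∈ K, 0 ≤ p k)
    (hsum : ∑ k ∈ K, p k = 1) {x y : E}
    (hsc : ∀ k ∈ K, f k y ≥ f k x + ⟪gradient (f k) x, y - x⟫ + (μ / 2) * ‖y - x‖ ^ 2) :
    ∑ k ∈ K, p k * (f k x - f k y) + (μ / 2) * ‖x - y‖ ^ 2
      ≤ ⟪x - y, ∑ k ∈ K, p k • gradient (f k) x⟫ :=
  calc ∑ k ∈ K, p k * (f k x - f k y) + (μ / 2) * ‖x - y‖ ^ 2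
      = ∑ k ∈ K, p k * (f k x - f k y + (μ / 2) * ‖x - y‖ ^ 2) := by
        simp only [mul_add, sum_add_distrib, ← sum_mul, hsum, one_mul]
    _ ≤ ∑ k ∈ K, p k * ⟪x - y, gradient (f k) x⟫ := sum_le_sum fun k hk ↦ by
        refine mul_le_mul_of_nonneg_left ?_ (hp k hk)
        have h := hsc k hk
        rw [← neg_sub x y, inner_neg_right, norm_neg, real_inner_comm] at h
        linarith
    _ = ⟪x - y, ∑ k ∈ K, p k • gradient (f k) x⟫ := by
        simp only [inner_sum, real_inner_smul_right]

end Weighted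

theorem norm_sub_smul_sq_le_of_inner_ge {E : Type*} [NormedAddCommGroup E]
    [InnerProductSpace ℝ E] {v g : E} {c μ L B S : ℝ} (hc : 0 ≤ c) (hcL : 4 * L * c ≤ 1)
    (hB : 0 ≤ B) (hinner : B - S + (μ / 2) * ‖v‖ ^ 2 ≤ ⟪v, g⟫) (hg : ‖g‖ ^ 2 ≤ 4 * L * B) :
    ‖v - c • g‖ ^ 2 ≤ (1 - μ * c) * ‖v‖ ^ 2 + 2 * c * S := by
  rw [norm_sub_sq_real, real_inner_smul_right, norm_smul, mul_pow, Real.norm_eq_abs, sq_abs]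
  have hcB : c ^ 2 * ‖g‖ ^ 2 ≤ c * B :=
    calc c ^ 2 * ‖g‖ ^ 2 ≤ c ^ 2 * (4 * L * B) := by gcongr
      _ = (4 * L * c) * (c * B) := by ring
      _ ≤ c * B := mul_le_of_le_one_left (mul_nonneg hc hB) hcL
  nlinarith [mul_le_mul_of_nonneg_left hinner hc, mul_nonneg hc hB]

theorem lemma_one_descent_bound_general
    {ι : Type*} (n : ℕ) (d r : ℝ) (hd : 1 ≤ d) (hr1 : 1 ≤ r) (hrd : r ≤ d)
    (μ L : ℝ) (hμ : 0 < μ) (hμL : μ ≤ L)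
    (K : Finset ι)
    (p : ι → ℝ) (hp : ∀ k ∈ K, 0 ≤ p k) (hsum : ∑ k ∈ K, p k = 1)
    (Fk : ι → EuclideanSpace ℝ (Fin n) → ℝ)
    (hdiff : ∀ k ∈ K, Differentiable ℝ (Fk k))
    (hsmooth : ∀ k ∈ K, ∀ x y : EuclideanSpace ℝ (Fin n),
      ‖gradient (Fk k) x - gradient (Fk k) y‖ ≤ L * ‖x - y‖)
    (hsc : ∀ k ∈ K, ∀ x y : EuclideanSpace ℝ (Fin n),
      Fk k x ≥ Fk k y + ⟪gradient (Fk k) y, x - y⟫ + (μ / 2) * ‖x - y‖ ^ 2)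
    (Fkstar : ι → ℝ)
    (hFk : ∀ k ∈ K, ∃ θ, Fk k θ = Fkstar k ∧ ∀ x, Fkstar k ≤ Fk k x)
    (F : EuclideanSpace ℝ (Fin n) → ℝ)
    (θstar : EuclideanSpace ℝ (Fin n))
    (ζ1 ζ2 : ℝ)
    (hΓ1 : |F θstar - ∑ k ∈ K, p k * Fkstar k| ≤ ζ1)
    (hΓ2 : |F θstar - ∑ k ∈ K, p k * Fk k θstar| ≤ ζ2)
    (α : ℝ) (hα0 : 0 < α) (hα : α ≤ 1 / (4 * L))
    (θbar : EuclideanSpace ℝ (Fin n)) :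
    ‖θbar - θstar - α • ((r / d) • ∑ k ∈ K, p k • gradient (Fk k) θbar)‖ ^ 2
      ≤ (1 - μ * α * r / d) * ‖θbar - θstar‖ ^ 2
        + α * r * (2 * (ζ1 + ζ2)) / d := by
  have hL : 0 < L := hμ.trans_le hμL
  have hlow : ∀ k ∈ K, ∀ z, Fkstar k ≤ Fk k z := fun k hk ↦ (hFk k hk).choose_spec.2
  have hc : 0 ≤ α * (r / d) := by positivity
  have hcL : 4 * L * (α * (r / d)) ≤ 1 := by
    rw [le_div_iff₀' (by positivity)] at hα
    nlinarith [div_le_one_of_le₀ hrd (by linarith : (0 : ℝ) ≤ d)]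
  have hgap : ∑ k ∈ K, p k * (Fk k θstar - Fkstar k) ≤ ζ1 + ζ2 := by
    simp only [mul_sub, sum_sub_distrib]
    linarith [(abs_le.mp hΓ1).2, (abs_le.mp hΓ2).1]
  have hinner := sum_mul_sub_add_le_inner_sum_smul_gradient hp hsum
    (fun k hk ↦ hsc k hk θstar θbar)
  calc _ = ‖θbar - θstar - (α * (r / d)) • ∑ k ∈ K, p k • gradient (Fk k) θbar‖ ^ 2 := by
        rw [smul_smul]
    _ ≤ (1 - μ * (α * (r / d))) * ‖θbar - θstar‖ ^ 2
          + 2 * (α * (r / d)) * ∑ k ∈ K, p k * (Fk k θstar - Fkstar k) :=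
        norm_sub_smul_sq_le_of_inner_ge hc hcL
          (sum_nonneg fun k hk ↦ mul_nonneg (hp k hk) (sub_nonneg.2 (hlow k hk θbar)))
          (by simpa only [mul_sub, sum_sub_distrib, sub_sub_sub_cancel_right] using hinner)
          (norm_sum_smul_gradient_sq_le hL hp hsum hdiff hsmooth hlow θbar)
    _ ≤ (1 - μ * (α * (r / d))) * ‖θbar - θstar‖ ^ 2 + 2 * (α * (r / d)) * (ζ1 + ζ2) := by
        gcongr
    _ = _ := by ring

/-- Lemma 1 of the paper: with `ḡ = (r/d) Σ p_k ∇F_k(θ̄)` the expected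
sparsified aggregated gradient, step size `0 < α ≤ 1/(4L)` and heterogeneity
level `A = 2(ζ1 + ζ2)`, one has
`‖θ̄ − θ* − αḡ‖² ≤ (1 − μαr/d)‖θ̄ − θ*‖² + αrA/d`. -/
theorem lemma_one_descent_bound
    {ι : Type*} (n : ℕ) (d r : ℝ) (hd : 1 ≤ d) (hr1 : 1 ≤ r) (hrd : r ≤ d)
    (μ L : ℝ) (hμ : 0 < μ) (hμL : μ ≤ L)
    (K : Finset ι) (hK : K.Nonempty)
    (p : ι → ℝ) (hp : ∀ k ∈ K, 0 ≤ p k) (hsum : ∑ k ∈ K, p k = 1)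
    (Fk : ι → EuclideanSpace ℝ (Fin n) → ℝ)
    (hdiff : ∀ k ∈ K, Differentiable ℝ (Fk k))
    (hsmooth : ∀ k ∈ K, ∀ x y : EuclideanSpace ℝ (Fin n),
      ‖gradient (Fk k) x - gradient (Fk k) y‖ ≤ L * ‖x - y‖)
    (hsc : ∀ k ∈ K, ∀ x y : EuclideanSpace ℝ (Fin n),
      Fk k x ≥ Fk k y + ⟪gradient (Fk k) y, x - y⟫ + (μ / 2) * ‖x - y‖ ^ 2)
    (Fkstar : ι → ℝ)
    (hFk : ∀ k ∈ K, ∃ θ, Fk k θ = Fkstar k ∧ ∀ x, Fkstar k ≤ Fk k x)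
    (F : EuclideanSpace ℝ (Fin n) → ℝ)
    (θstar : EuclideanSpace ℝ (Fin n)) (hmin : ∀ θ, F θstar ≤ F θ)
    (ζ1 ζ2 : ℝ) (hζ1 : 0 ≤ ζ1) (hζ2 : 0 ≤ ζ2)
    (hΓ1 : |F θstar - ∑ k ∈ K, p k * Fkstar k| ≤ ζ1)
    (hΓ2 : |F θstar - ∑ k ∈ K, p k * Fk k θstar| ≤ ζ2)
    (α : ℝ) (hα0 : 0 < α) (hα : α ≤ 1 / (4 * L))
    (θbar : EuclideanSpace ℝ (Fin n)) :
    ‖θbar - θstar - α • ((r / d) • ∑ k ∈ K, p k • gradient (Fk k) θbar)‖ ^ 2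
      ≤ (1 - μ * α * r / d) * ‖θbar - θstar‖ ^ 2
        + α * r * (2 * (ζ1 + ζ2)) / d :=
  lemma_one_descent_bound_general n d r hd hr1 hrd μ L hμ hμL K p hp hsum Fk hdiff hsmooth hsc
    Fkstar hFk F θstar ζ1 ζ2 hΓ1 hΓ2 α hα0 hα θbar
end

section
/- Let 0 < μ ≤ L, let K be a nonempty finite index set with weights p_k ≥ 0 (k ∈ K) summing to 1, and for each k ∈ K let F_k : ℝ^n → ℝ be differentiable with L-Lipschitz gradient and μ-strongly convex, attaining its minimum F_k* at θ_k* ∈ ℝ^n. Let F : ℝ^n → ℝ attain its global minimum F* at θ* ∈ ℝ^n, and let ζ1, ζ2 ≥ 0 satisfy |F* − Σ_{k∈K} p_k F_k*| ≤ ζ1 and |F* − Σ_{k∈K} p_k F_k(θ*)| ≤ ζ2; set A = 2(ζ1 + ζ2). Let C1, C2 ≥ 0, let θ ∈ ℝ^n, and suppose g_k ≥ 0 (k ∈ K) are real numbers with g_k ≤ C1 + C2 ‖∇F_k(θ)‖² for every k. Then Σ_{k∈K} p_k g_k ≤ C1 + 2 L² C2 ( ‖θ − θ*‖² + A/μ ).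 -/
/-!
Each `F_k` has vanishing gradient at its minimizer `θ_k*`, so by `L`-smoothness
`‖∇F_k(θ)‖² ≤ 2L²(‖θ − θ*‖² + ‖θ* − θ_k*‖²)`, and strong convexity bounds
`‖θ* − θ_k*‖²` by `(2/μ)(F_k(θ*) − F_k*)`. Averaging with the weights `p_k`, the
heterogeneity gaps `Σ p_k (F_k(θ*) − F_k*)` add up to at most `ζ1 + ζ2`.
-/

open RealInnerProductSpace Finset

section Gradient

variable {E : Type*} [NormedAddCommGroup E] [InnerProductSpace ℝ E] [CompleteSpace E]
  {f : E → ℝ}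

theorem IsLocalMin.gradient_eq_zero {a : E} (h : IsLocalMin f a) : gradient f a = 0 := by
  rw [gradient, h.fderiv_eq_zero, map_zero]

theorem sq_norm_sub_le_of_strongConvex {μ : ℝ} (hμ : 0 < μ)
    (hsc : ∀ x y, f x ≥ f y + ⟪gradient f y, x - y⟫ + (μ / 2) * ‖x - y‖ ^ 2)
    {a : E} (ha : ∀ x, f a ≤ f x) (x : E) :
    ‖x - a‖ ^ 2 ≤ 2 / μ * (f x - f a) := by
  have hgrad : gradient f a = 0 := IsLocalMin.gradient_eq_zero (.of_forall ha)
  have := hsc x a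
  rw [hgrad, inner_zero_left, add_zero] at this
  rw [div_mul_eq_mul_div, le_div_iff₀ hμ]
  linarith

theorem sq_norm_gradient_le_of_lipschitz {L : ℝ}
    (hsmooth : ∀ x y, ‖gradient f x - gradient f y‖ ≤ L * ‖x - y‖)
    {a : E} (ha : gradient f a = 0) (x y : E) :
    ‖gradient f x‖ ^ 2 ≤ 2 * L ^ 2 * (‖x - y‖ ^ 2 + ‖y - a‖ ^ 2) := by
  have htri : ‖gradient f x‖ ≤ L * ‖x - y‖ + L * ‖y - a‖ := by
    calc ‖gradient f x‖
        = ‖(gradient f x - gradient f y) + (gradient f y - gradient f a)‖ := by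
          rw [ha, sub_zero, sub_add_cancel]
      _ ≤ ‖gradient f x - gradient f y‖ + ‖gradient f y - gradient f a‖ := norm_add_le _ _
      _ ≤ L * ‖x - y‖ + L * ‖y - a‖ := add_le_add (hsmooth x y) (hsmooth y a)
  calc ‖gradient f x‖ ^ 2
      ≤ (L * ‖x - y‖ + L * ‖y - a‖) ^ 2 := pow_le_pow_left₀ (norm_nonneg _) htri 2
    _ ≤ 2 * L ^ 2 * (‖x - y‖ ^ 2 + ‖y - a‖ ^ 2) := by
      nlinarith [sq_nonneg (L * ‖x - y‖ - L * ‖y - a‖)]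

theorem sq_norm_gradient_le_of_lipschitz_of_strongConvex {μ L : ℝ} (hμ : 0 < μ)
    (hsmooth : ∀ x y, ‖gradient f x - gradient f y‖ ≤ L * ‖x - y‖)
    (hsc : ∀ x y, f x ≥ f y + ⟪gradient f y, x - y⟫ + (μ / 2) * ‖x - y‖ ^ 2)
    {a : E} (ha : ∀ x, f a ≤ f x) (x y : E) :
    ‖gradient f x‖ ^ 2 ≤ 2 * L ^ 2 * (‖x - y‖ ^ 2 + 2 / μ * (f y - f a)) := by
  have hgrad : gradient f a = 0 := IsLocalMin.gradient_eq_zero (.of_forall ha)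
  calc ‖gradient f x‖ ^ 2
      ≤ 2 * L ^ 2 * (‖x - y‖ ^ 2 + ‖y - a‖ ^ 2) :=
        sq_norm_gradient_le_of_lipschitz hsmooth hgrad x y
    _ ≤ 2 * L ^ 2 * (‖x - y‖ ^ 2 + 2 / μ * (f y - f a)) := by
      gcongr
      exact sq_norm_sub_le_of_strongConvex hμ hsc ha y

end Gradient

theorem Finset.sum_mul_sub_le_of_abs_sub_sum_le {ι : Type*} (s : Finset ι) (p a b : ι → ℝ)
    {c ε δ : ℝ} (hb : |c - ∑ i ∈ s, p i * b i| ≤ ε) (ha : |c - ∑ i ∈ s, p i * a i| ≤ δ) :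
    ∑ i ∈ s, p i * (a i - b i) ≤ ε + δ := by
  simp only [mul_sub, sum_sub_distrib]
  linarith [(abs_le.mp hb).2, (abs_le.mp ha).1]

theorem weighted_second_moment_bound_general
    {ι : Type*} (n : ℕ) (μ L : ℝ) (hμ : 0 < μ)
    (K : Finset ι)
    (p : ι → ℝ) (hp : ∀ k ∈ K, 0 ≤ p k) (hsum : ∑ k ∈ K, p k = 1)
    (Fk : ι → EuclideanSpace ℝ (Fin n) → ℝ)
    (hsmooth : ∀ k ∈ K, ∀ x y : EuclideanSpace ℝ (Fin n),
      ‖gradient (Fk k) x - gradient (Fk k) y‖ ≤ L * ‖x - y‖)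
    (hsc : ∀ k ∈ K, ∀ x y : EuclideanSpace ℝ (Fin n),
      Fk k x ≥ Fk k y + ⟪gradient (Fk k) y, x - y⟫ + (μ / 2) * ‖x - y‖ ^ 2)
    (θk : ι → EuclideanSpace ℝ (Fin n))
    (hθk : ∀ k ∈ K, ∀ x, Fk k (θk k) ≤ Fk k x)
    (F : EuclideanSpace ℝ (Fin n) → ℝ)
    (θstar : EuclideanSpace ℝ (Fin n))
    (ζ1 ζ2 : ℝ)
    (hΓ1 : |F θstar - ∑ k ∈ K, p k * Fk k (θk k)| ≤ ζ1)
    (hΓ2 : |F θstar - ∑ k ∈ K, p k * Fk k θstar| ≤ ζ2)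
    (C1 C2 : ℝ) (hC2 : 0 ≤ C2)
    (θ : EuclideanSpace ℝ (Fin n))
    (g : ι → ℝ)
    (hg : ∀ k ∈ K, g k ≤ C1 + C2 * ‖gradient (Fk k) θ‖ ^ 2) :
    ∑ k ∈ K, p k * g k
      ≤ C1 + 2 * L ^ 2 * C2 * (‖θ - θstar‖ ^ 2 + 2 * (ζ1 + ζ2) / μ) := by
  set gap : ι → ℝ := fun k ↦ Fk k θstar - Fk k (θk k)
  have hgap : ∑ k ∈ K, p k * gap k ≤ ζ1 + ζ2 :=
    K.sum_mul_sub_le_of_abs_sub_sum_le p _ _ hΓ1 hΓ2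
  calc ∑ k ∈ K, p k * g k
      ≤ ∑ k ∈ K, p k * (C1 + 2 * L ^ 2 * C2 * (‖θ - θstar‖ ^ 2 + 2 / μ * gap k)) := by
        refine sum_le_sum fun k hk ↦ mul_le_mul_of_nonneg_left ?_ (hp k hk)
        have := sq_norm_gradient_le_of_lipschitz_of_strongConvex hμ (hsmooth k hk) (hsc k hk)
          (hθk k hk) θ θstar
        linarith [hg k hk, mul_le_mul_of_nonneg_left this hC2]
    _ = C1 + 2 * L ^ 2 * C2 * (‖θ - θstar‖ ^ 2 + 2 / μ * ∑ k ∈ K, p k * gap k) := by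
        simp only [mul_add, mul_left_comm (p _), sum_add_distrib, ← mul_sum, ← sum_mul, hsum,
          one_mul]
    _ ≤ C1 + 2 * L ^ 2 * C2 * (‖θ - θstar‖ ^ 2 + 2 * (ζ1 + ζ2) / μ) := by
        rw [mul_div_right_comm]
        gcongr

/-- Deterministic core of Lemma 2 of the paper: if each `g_k` (the conditional
second moment of the stochastic gradient of device `k`) satisfies
`g_k ≤ C1 + C2‖∇F_k(θ)‖²`, then the weighted sum is bounded as
`Σ p_k g_k ≤ C1 + 2L²C2(‖θ − θ*‖² + A/μ)` with `A = 2(ζ1 + ζ2)`. -/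
theorem weighted_second_moment_bound
    {ι : Type*} (n : ℕ) (μ L : ℝ) (hμ : 0 < μ) (hμL : μ ≤ L)
    (K : Finset ι) (hK : K.Nonempty)
    (p : ι → ℝ) (hp : ∀ k ∈ K, 0 ≤ p k) (hsum : ∑ k ∈ K, p k = 1)
    (Fk : ι → EuclideanSpace ℝ (Fin n) → ℝ)
    (hdiff : ∀ k ∈ K, Differentiable ℝ (Fk k))
    (hsmooth : ∀ k ∈ K, ∀ x y : EuclideanSpace ℝ (Fin n),
      ‖gradient (Fk k) x - gradient (Fk k) y‖ ≤ L * ‖x - y‖)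
    (hsc : ∀ k ∈ K, ∀ x y : EuclideanSpace ℝ (Fin n),
      Fk k x ≥ Fk k y + ⟪gradient (Fk k) y, x - y⟫ + (μ / 2) * ‖x - y‖ ^ 2)
    (θk : ι → EuclideanSpace ℝ (Fin n))
    (hθk : ∀ k ∈ K, ∀ x, Fk k (θk k) ≤ Fk k x)
    (F : EuclideanSpace ℝ (Fin n) → ℝ)
    (θstar : EuclideanSpace ℝ (Fin n)) (hmin : ∀ θ, F θstar ≤ F θ)
    (ζ1 ζ2 : ℝ) (hζ1 : 0 ≤ ζ1) (hζ2 : 0 ≤ ζ2)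
    (hΓ1 : |F θstar - ∑ k ∈ K, p k * Fk k (θk k)| ≤ ζ1)
    (hΓ2 : |F θstar - ∑ k ∈ K, p k * Fk k θstar| ≤ ζ2)
    (C1 C2 : ℝ) (hC1 : 0 ≤ C1) (hC2 : 0 ≤ C2)
    (θ : EuclideanSpace ℝ (Fin n))
    (g : ι → ℝ) (hg0 : ∀ k ∈ K, 0 ≤ g k)
    (hg : ∀ k ∈ K, g k ≤ C1 + C2 * ‖gradient (Fk k) θ‖ ^ 2) :
    ∑ k ∈ K, p k * g k
      ≤ C1 + 2 * L ^ 2 * C2 * (‖θ - θstar‖ ^ 2 + 2 * (ζ1 + ζ2) / μ) :=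
  weighted_second_moment_bound_general n μ L hμ K p hp hsum Fk hsmooth hsc θk hθk F θstar ζ1 ζ2 hΓ1
    hΓ2 C1 C2 hC2 θ g hg
end

section
/- Let ν be a positive integer, let d ≥ 1 and 0 ≤ r ≤ d be integers, and let ũ ∈ ℝ^d be a nonzero vector with at most r nonzero components; write s = ‖ũ‖₂ > 0. For each coordinate i ∈ {1,...,d}, let X_i be a real random variable which equals 0 almost surely if ũ_i = 0, and otherwise takes the value s · sign(ũ_i) · (z_i+1)/ν with probability p_i = ν|ũ_i|/s − z_i and the value s · sign(ũ_i) · z_i/ν with probability 1 − p_i, where z_i = ⌊ν|ũ_i|/s⌋. Then the random vector X = (X_1,...,X_d) satisfies E[X] = ũ and E[‖X − ũ‖₂²] = Σ_{i=1}^d E[(X_i − ũ_i)²] ≤ r s²/(4ν²). -/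
/-!
A nonzero coordinate `ũᵢ` is quantized to `c · R`, where `c = s · sign ũᵢ / ν` and `R` is the
stochastic rounding of `t = ν |ũᵢ| / s`: it equals `⌊t⌋ + 1` with probability `fract t` and `⌊t⌋`
otherwise. Hence `E R = t` and `E (R - t)² = fract t (1 - fract t) ≤ 1/4`, so the coordinate has
mean `c t = ũᵢ` and variance at most `c² / 4 ≤ s² / (4ν²)`. Zero coordinates contribute nothing,
and the squared Euclidean error splits over the at most `r` remaining coordinates.
-/

open MeasureTheory

section TwoPoint

variable {α E : Type*} [MeasurableSpace α] [MeasurableSingletonClass α] [NormedAddCommGroup E]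
  {p q : ℝ} {a b : α}

lemma integrable_ofReal_smul_dirac_add (g : α → E) :
    Integrable g (ENNReal.ofReal p • Measure.dirac a + ENNReal.ofReal q • Measure.dirac b) :=
  ((integrable_dirac enorm_lt_top).smul_measure ENNReal.ofReal_ne_top).add_measure
    ((integrable_dirac enorm_lt_top).smul_measure ENNReal.ofReal_ne_top)

lemma integral_ofReal_smul_dirac_add [NormedSpace ℝ E] [CompleteSpace E] (hp : 0 ≤ p)
    (hq : 0 ≤ q) (g : α → E) :
    ∫ x, g x ∂(ENNReal.ofReal p • Measure.dirac a + ENNReal.ofReal q • Measure.dirac b) =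
      p • g a + q • g b := by
  rw [integral_add_measure ((integrable_dirac enorm_lt_top).smul_measure ENNReal.ofReal_ne_top)
    ((integrable_dirac enorm_lt_top).smul_measure ENNReal.ofReal_ne_top),
    integral_smul_measure, integral_smul_measure, integral_dirac, integral_dirac,
    ENNReal.toReal_ofReal hp, ENNReal.toReal_ofReal hq]

variable {Ω : Type*} [MeasurableSpace Ω] {μ : Measure Ω} {Y : Ω → α}

lemma integrable_comp_of_map_eq_ofReal_smul_dirac_add (hY : AEMeasurable Y μ)
    (hlaw : μ.map Y = ENNReal.ofReal p • Measure.dirac a + ENNReal.ofReal q • Measure.dirac b)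
    (g : α → E) : Integrable (fun ω => g (Y ω)) μ := by
  have hg := integrable_ofReal_smul_dirac_add (p := p) (q := q) (a := a) (b := b) g
  rw [← hlaw] at hg
  exact (integrable_map_measure hg.aestronglyMeasurable hY).mp hg

lemma integral_comp_of_map_eq_ofReal_smul_dirac_add [NormedSpace ℝ E] [CompleteSpace E]
    (hY : AEMeasurable Y μ)
    (hlaw : μ.map Y = ENNReal.ofReal p • Measure.dirac a + ENNReal.ofReal q • Measure.dirac b)
    (hp : 0 ≤ p) (hq : 0 ≤ q) (g : α → E) : ∫ ω, g (Y ω) ∂μ = p • g a + q • g b := by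
  have hg := integrable_ofReal_smul_dirac_add (p := p) (q := q) (a := a) (b := b) g
  rw [← hlaw] at hg
  rw [← integral_map hY hg.aestronglyMeasurable, hlaw, integral_ofReal_smul_dirac_add hp hq]

end TwoPoint

section StochasticRounding

variable {Ω : Type*} [MeasurableSpace Ω] {μ : Measure Ω} {Y : Ω → ℝ} {c t : ℝ}

lemma integral_of_map_eq_stochasticRounding (hY : AEMeasurable Y μ)
    (hlaw : μ.map Y = ENNReal.ofReal (Int.fract t) • Measure.dirac (c * (⌊t⌋ + 1))
      + ENNReal.ofReal (1 - Int.fract t) • Measure.dirac (c * ⌊t⌋)) :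
    ∫ ω, Y ω ∂μ = c * t := by
  refine (integral_comp_of_map_eq_ofReal_smul_dirac_add hY hlaw (Int.fract_nonneg t)
    (sub_nonneg.2 (Int.fract_lt_one t).le) id).trans ?_
  unfold Int.fract
  simp only [id, smul_eq_mul]
  ring

lemma integral_sq_sub_le_of_map_eq_stochasticRounding (hY : AEMeasurable Y μ)
    (hlaw : μ.map Y = ENNReal.ofReal (Int.fract t) • Measure.dirac (c * (⌊t⌋ + 1))
      + ENNReal.ofReal (1 - Int.fract t) • Measure.dirac (c * ⌊t⌋)) :
    ∫ ω, (Y ω - c * t) ^ 2 ∂μ ≤ c ^ 2 / 4 := by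
  rw [integral_comp_of_map_eq_ofReal_smul_dirac_add hY hlaw (Int.fract_nonneg t)
    (sub_nonneg.2 (Int.fract_lt_one t).le) (fun x => (x - c * t) ^ 2)]
  set f := Int.fract t
  calc _ = c ^ 2 * (f * (1 - f)) := by unfold f Int.fract; simp only [smul_eq_mul]; ring
    _ ≤ c ^ 2 / 4 := by nlinarith [sq_nonneg (c * (2 * f - 1))]

end StochasticRounding

lemma Real.sign_mul_abs (x : ℝ) : Real.sign x * |x| = x := by
  rcases lt_trichotomy x 0 with h | rfl | h
  · rw [Real.sign_of_neg h, abs_of_neg h]; ring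
  · simp
  · rw [Real.sign_of_pos h, abs_of_pos h, one_mul]

lemma Real.sign_sq_le_one (x : ℝ) : Real.sign x ^ 2 ≤ 1 := by
  rcases Real.sign_apply_eq x with h | h | h <;> norm_num [h]

section Quantizer

variable {Ω : Type*} [MeasurableSpace Ω] {μ : Measure Ω} {Y : Ω → ℝ} {ν : ℕ} {s v : ℝ}

lemma quantizer_moments (hν : 0 < ν) (hs : s ≠ 0) (hY : AEMeasurable Y μ)
    (hlaw : μ.map Y =
      ENNReal.ofReal ((ν : ℝ) * |v| / s - ⌊(ν : ℝ) * |v| / s⌋)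
          • Measure.dirac (s * Real.sign v * ((⌊(ν : ℝ) * |v| / s⌋ + 1) / ν))
        + ENNReal.ofReal (1 - ((ν : ℝ) * |v| / s - ⌊(ν : ℝ) * |v| / s⌋))
          • Measure.dirac (s * Real.sign v * (⌊(ν : ℝ) * |v| / s⌋ / ν))) :
    Integrable Y μ ∧ ∫ ω, Y ω ∂μ = v ∧ Integrable (fun ω => (Y ω - v) ^ 2) μ ∧
      ∫ ω, (Y ω - v) ^ 2 ∂μ ≤ s ^ 2 / (4 * (ν : ℝ) ^ 2) := by
  set t := (ν : ℝ) * |v| / s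
  set c := s * Real.sign v / ν
  have hν' : (ν : ℝ) ≠ 0 := by positivity
  have hct : c * t = v := by
    calc c * t = Real.sign v * |v| := by unfold c t; field_simp
      _ = v := Real.sign_mul_abs v
  have hc : c ^ 2 ≤ s ^ 2 / (ν : ℝ) ^ 2 := by
    calc c ^ 2 = Real.sign v ^ 2 * (s ^ 2 / (ν : ℝ) ^ 2) := by unfold c; ring
      _ ≤ s ^ 2 / (ν : ℝ) ^ 2 := mul_le_of_le_one_left (by positivity) (Real.sign_sq_le_one v)
  replace hlaw : μ.map Y = ENNReal.ofReal (Int.fract t) • Measure.dirac (c * (⌊t⌋ + 1))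
      + ENNReal.ofReal (1 - Int.fract t) • Measure.dirac (c * ⌊t⌋) := by
    convert hlaw using 4 <;> first | rfl | ring
  refine ⟨integrable_comp_of_map_eq_ofReal_smul_dirac_add hY hlaw id, ?_,
    integrable_comp_of_map_eq_ofReal_smul_dirac_add hY hlaw (fun x => (x - v) ^ 2), ?_⟩
  · rw [integral_of_map_eq_stochasticRounding hY hlaw, hct]
  · calc ∫ ω, (Y ω - v) ^ 2 ∂μ ≤ c ^ 2 / 4 :=
          hct ▸ integral_sq_sub_le_of_map_eq_stochasticRounding hY hlaw
      _ ≤ s ^ 2 / (ν : ℝ) ^ 2 / 4 := by gcongr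
      _ = s ^ 2 / (4 * (ν : ℝ) ^ 2) := by ring

lemma quantizer_coordinate_moments (hν : 0 < ν) (hs : s ≠ 0) (hY : AEMeasurable Y μ)
    (hzero : v = 0 → ∀ᵐ ω ∂μ, Y ω = 0)
    (hlaw : v ≠ 0 → μ.map Y =
      ENNReal.ofReal ((ν : ℝ) * |v| / s - ⌊(ν : ℝ) * |v| / s⌋)
          • Measure.dirac (s * Real.sign v * ((⌊(ν : ℝ) * |v| / s⌋ + 1) / ν))
        + ENNReal.ofReal (1 - ((ν : ℝ) * |v| / s - ⌊(ν : ℝ) * |v| / s⌋))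
          • Measure.dirac (s * Real.sign v * (⌊(ν : ℝ) * |v| / s⌋ / ν))) :
    Integrable Y μ ∧ ∫ ω, Y ω ∂μ = v ∧ Integrable (fun ω => (Y ω - v) ^ 2) μ ∧
      ∫ ω, (Y ω - v) ^ 2 ∂μ ≤ if v ≠ 0 then s ^ 2 / (4 * (ν : ℝ) ^ 2) else 0 := by
  by_cases hv : v = 0
  · subst hv
    have hY0 : Y =ᵐ[μ] 0 := hzero rfl
    have hsq0 : (fun ω => (Y ω - 0) ^ 2) =ᵐ[μ] 0 := by
      filter_upwards [hY0] with ω hω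
      simp [hω]
    simp only [ne_eq, not_true_eq_false, if_false]
    exact ⟨(integrable_zero _ _ μ).congr hY0.symm, integral_eq_zero_of_ae hY0,
      (integrable_zero _ _ μ).congr hsq0.symm, (integral_eq_zero_of_ae hsq0).le⟩
  · rw [if_pos hv]
    exact quantizer_moments hν hs hY (hlaw hv)

end Quantizer

theorem random_quantizer_vector_unbiased_and_variance_general
    (ν : ℕ) (hν : 0 < ν) (d r : ℕ)
    (u : EuclideanSpace ℝ (Fin d)) (hu : u ≠ 0)
    (hsparse : (Finset.univ.filter (fun i => u i ≠ 0)).card ≤ r)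
    {Ω : Type*} [MeasurableSpace Ω] (μ : Measure Ω)
    (X : Ω → EuclideanSpace ℝ (Fin d)) (hX : Measurable X)
    (hzero : ∀ i : Fin d, u i = 0 → ∀ᵐ ω ∂μ, X ω i = 0)
    (hlaw : ∀ i : Fin d, u i ≠ 0 →
      Measure.map (fun ω => X ω i) μ =
        ENNReal.ofReal ((ν : ℝ) * |u i| / ‖u‖ - ⌊(ν : ℝ) * |u i| / ‖u‖⌋)
            • Measure.dirac
              (‖u‖ * Real.sign (u i) * ((⌊(ν : ℝ) * |u i| / ‖u‖⌋ + 1) / ν))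
          + ENNReal.ofReal (1 - ((ν : ℝ) * |u i| / ‖u‖ - ⌊(ν : ℝ) * |u i| / ‖u‖⌋))
            • Measure.dirac
              (‖u‖ * Real.sign (u i) * (⌊(ν : ℝ) * |u i| / ‖u‖⌋ / ν))) :
    (∫ ω, X ω ∂μ) = u ∧
    (∫ ω, ‖X ω - u‖ ^ 2 ∂μ) = ∑ i : Fin d, ∫ ω, (X ω i - u i) ^ 2 ∂μ ∧
    ∑ i : Fin d, ∫ ω, (X ω i - u i) ^ 2 ∂μ
      ≤ (r : ℝ) * ‖u‖ ^ 2 / (4 * (ν : ℝ) ^ 2) := by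
  have hcoord (i : Fin d) := quantizer_coordinate_moments hν (norm_ne_zero_iff.2 hu)
    (Y := fun ω => X ω i) (by fun_prop) (hzero i) (hlaw i)
  refine ⟨?_, ?_, ?_⟩
  · ext i
    rw [eval_integral_piLp fun j => (hcoord j).1, (hcoord i).2.1]
  · simp_rw [EuclideanSpace.real_norm_sq_eq, PiLp.sub_apply]
    exact integral_finsetSum _ fun i _ => (hcoord i).2.2.1
  · calc ∑ i, ∫ ω, (X ω i - u i) ^ 2 ∂μ
        ≤ ∑ i, if u i ≠ 0 then ‖u‖ ^ 2 / (4 * (ν : ℝ) ^ 2) else 0 :=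
          Finset.sum_le_sum fun i _ => (hcoord i).2.2.2
      _ = ((Finset.univ.filter fun i => u i ≠ 0).card : ℝ) * (‖u‖ ^ 2 / (4 * (ν : ℝ) ^ 2)) := by
          rw [← Finset.sum_filter, Finset.sum_const, nsmul_eq_mul]
      _ ≤ r * (‖u‖ ^ 2 / (4 * (ν : ℝ) ^ 2)) := by gcongr
      _ = r * ‖u‖ ^ 2 / (4 * (ν : ℝ) ^ 2) := by ring

/-- Unbiasedness and bounded variance of the `ν`-level random quantizer applied
componentwise to a sparsified vector `ũ` with at most `r` nonzero entries and
norm `s = ‖ũ‖₂`: `E[X] = ũ` and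
`E[‖X − ũ‖₂²] = Σᵢ E[(Xᵢ − ũᵢ)²] ≤ r s²/(4ν²)`. -/
theorem random_quantizer_vector_unbiased_and_variance
    (ν : ℕ) (hν : 0 < ν) (d r : ℕ) (hd : 1 ≤ d) (hrd : r ≤ d)
    (u : EuclideanSpace ℝ (Fin d)) (hu : u ≠ 0)
    (hsparse : (Finset.univ.filter (fun i => u i ≠ 0)).card ≤ r)
    {Ω : Type*} [MeasurableSpace Ω] (μ : Measure Ω) [IsProbabilityMeasure μ]
    (X : Ω → EuclideanSpace ℝ (Fin d)) (hX : Measurable X)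
    (hzero : ∀ i : Fin d, u i = 0 → ∀ᵐ ω ∂μ, X ω i = 0)
    (hlaw : ∀ i : Fin d, u i ≠ 0 →
      Measure.map (fun ω => X ω i) μ =
        ENNReal.ofReal ((ν : ℝ) * |u i| / ‖u‖ - ⌊(ν : ℝ) * |u i| / ‖u‖⌋)
            • Measure.dirac
              (‖u‖ * Real.sign (u i) * ((⌊(ν : ℝ) * |u i| / ‖u‖⌋ + 1) / ν))
          + ENNReal.ofReal (1 - ((ν : ℝ) * |u i| / ‖u‖ - ⌊(ν : ℝ) * |u i| / ‖u‖⌋))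
            • Measure.dirac
              (‖u‖ * Real.sign (u i) * (⌊(ν : ℝ) * |u i| / ‖u‖⌋ / ν))) :
    (∫ ω, X ω ∂μ) = u ∧
    (∫ ω, ‖X ω - u‖ ^ 2 ∂μ) = ∑ i : Fin d, ∫ ω, (X ω i - u i) ^ 2 ∂μ ∧
    ∑ i : Fin d, ∫ ω, (X ω i - u i) ^ 2 ∂μ
      ≤ (r : ℝ) * ‖u‖ ^ 2 / (4 * (ν : ℝ) ^ 2) :=
  random_quantizer_vector_unbiased_and_variance_general ν hν d r u hu hsparse μ X hX hzero hlaw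
end
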